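/- The map 𝓛 on Ω = [1,2) × [−1, ∞), defined by 𝓛(x,y) = (−1/(x−2), −1/(y+2)) for x ∈ [1, 3/2) and 𝓛(x,y) = (1/(x−1), 1/(y+1)) for x ∈ [3/2, 2), preserves the measure with density 1/(x+y)² with respect to two-dimensional Lebesgue measure on Ω. -/

import Mathlib

/-!
On each branch `𝓛` is a product map `(x, y) ↦ (ε / (x - a), ε / (y + a))`. Its Jacobian
`ε² / ((x - a)² (y + a)²)` is exactly compensated by the density, because the sum of the
coordinates transforms as `x + y ↦ ε (x + y) / ((x - a) (y + a))`. The left branch maps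
`(1, 3/2) × (-1, ∞)` bijectively onto `(1, 2) × (-1, 0)` and the right branch maps
`(3/2, 2) × (-1, ∞)` bijectively onto `(1, 2) × (0, ∞)`; up to null sets, the domains and the
images both tile `Ω`.
-/

open MeasureTheory

/-- The natural extension of the Lehner Gauss map on Ω = [1,2) × [-1,∞). -/
noncomputable def lehnerNatExt (p : ℝ × ℝ) : ℝ × ℝ :=
  if p.1 < 3 / 2 then (-1 / (p.1 - 2), -1 / (p.2 + 2))
  else (1 / (p.1 - 1), 1 / (p.2 + 1))

open Set Function
open scoped ENNReal

lemma lintegral_image_prodMap {f g f' g' : ℝ → ℝ} {s : Set (ℝ × ℝ)} (hs : MeasurableSet s)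
    (hf : ∀ p ∈ s, HasDerivAt f (f' p.1) p.1) (hg : ∀ p ∈ s, HasDerivAt g (g' p.2) p.2)
    (hinj : InjOn (Prod.map f g) s) (φ : ℝ × ℝ → ℝ≥0∞) :
    ∫⁻ q in Prod.map f g '' s, φ q =
      ∫⁻ p in s, ENNReal.ofReal |f' p.1 * g' p.2| * φ (Prod.map f g p) := by
  have hdet (c d : ℝ) :
      ((ContinuousLinearMap.toSpanSingleton ℝ c).prodMap
        (ContinuousLinearMap.toSpanSingleton ℝ d)).det = c * d := by
    rw [ContinuousLinearMap.det, ContinuousLinearMap.coe_prodMap, LinearMap.det_prodMap]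
    simp
  rw [lintegral_image_eq_lintegral_abs_det_fderiv_mul volume hs
    (fun p hp => ((hf p hp).hasFDerivAt.prodMap p (hg p hp).hasFDerivAt).hasFDerivWithinAt) hinj]
  simp_rw [hdet]

noncomputable def lehnerDensity (p : ℝ × ℝ) : ℝ≥0∞ := ENNReal.ofReal (1 / (p.1 + p.2) ^ 2)

section ReciprocalShift

variable {ε a : ℝ}

noncomputable def reciprocalShift (ε a t : ℝ) : ℝ := ε / (t - a)

lemma measurable_reciprocalShift : Measurable (reciprocalShift ε a) :=
  measurable_const.div (measurable_id.sub_const a)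

lemma hasDerivAt_reciprocalShift {x : ℝ} (hx : x ≠ a) :
    HasDerivAt (reciprocalShift ε a) (-ε / (x - a) ^ 2) x := by
  have h := (((hasDerivAt_id x).sub_const a).inv (sub_ne_zero.2 hx)).const_mul ε
  refine (h.congr_deriv (by simp [div_eq_mul_inv])).congr_of_eventuallyEq ?_
  exact .of_eq (funext fun t => div_eq_mul_inv ε (t - a))

lemma reciprocalShift_injective (hε : ε ≠ 0) : Injective (reciprocalShift ε a) := by
  intro x y h
  simpa [reciprocalShift, div_eq_mul_inv, hε] using h

lemma reciprocalShift_add_div (hε : ε ≠ 0) (u : ℝ) : reciprocalShift ε a (a + ε / u) = u := by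
  simp [reciprocalShift, hε]

lemma bijOn_reciprocalShift (hε : ε ≠ 0) {s t : Set ℝ}
    (hst : MapsTo (reciprocalShift ε a) s t) (hts : MapsTo (fun u => a + ε / u) t s) :
    BijOn (reciprocalShift ε a) s t :=
  ⟨hst, (reciprocalShift_injective hε).injOn,
    fun u hu => ⟨a + ε / u, hts hu, reciprocalShift_add_div hε u⟩⟩

lemma abs_mul_one_div_sq_reciprocalShift (hε : ε ≠ 0) {x y : ℝ} (hx : x ≠ a) (hy : y ≠ -a) :
    |(-ε / (x - a) ^ 2) * (-ε / (y - -a) ^ 2)| *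
        (1 / (reciprocalShift ε a x + reciprocalShift ε (-a) y) ^ 2) = 1 / (x + y) ^ 2 := by
  have hx' : x - a ≠ 0 := sub_ne_zero.2 hx
  have hy' : y - -a ≠ 0 := sub_ne_zero.2 hy
  have hsum : reciprocalShift ε a x + reciprocalShift ε (-a) y =
      ε * (x + y) / ((x - a) * (y - -a)) := by
    simp only [reciprocalShift]; field_simp; ring
  have hjac : 0 ≤ (-ε / (x - a) ^ 2) * (-ε / (y - -a) ^ 2) := by
    rw [neg_div, neg_div, neg_mul_neg, div_mul_div_comm]
    exact div_nonneg (mul_self_nonneg ε) (by positivity)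
  rw [hsum, abs_of_nonneg hjac, one_div, ← inv_pow, inv_div]
  field_simp

lemma setLIntegral_lehnerDensity_image (hε : ε ≠ 0) {s : Set (ℝ × ℝ)} (hs : MeasurableSet s)
    (hsa : ∀ p ∈ s, p.1 ≠ a ∧ p.2 ≠ -a) :
    ∫⁻ q in Prod.map (reciprocalShift ε a) (reciprocalShift ε (-a)) '' s, lehnerDensity q =
      ∫⁻ p in s, lehnerDensity p := by
  rw [lintegral_image_prodMap (f' := fun x => -ε / (x - a) ^ 2) (g' := fun y => -ε / (y - -a) ^ 2)
    hs (fun p hp => hasDerivAt_reciprocalShift (hsa p hp).1)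
    (fun p hp => hasDerivAt_reciprocalShift (hsa p hp).2)
    ((reciprocalShift_injective hε).prodMap (reciprocalShift_injective hε)).injOn]
  refine setLIntegral_congr_fun hs fun p hp => ?_
  rw [lehnerDensity, lehnerDensity, ← ENNReal.ofReal_mul (abs_nonneg _), Prod.map_fst,
    Prod.map_snd, abs_mul_one_div_sq_reciprocalShift hε (hsa p hp).1 (hsa p hp).2]

lemma setLIntegral_lehnerDensity_inter_preimage (hε : ε ≠ 0) {D R A : Set (ℝ × ℝ)}
    (hD : MeasurableSet D) (hDa : ∀ p ∈ D, p.1 ≠ a ∧ p.2 ≠ -a)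
    (hbij : BijOn (Prod.map (reciprocalShift ε a) (reciprocalShift ε (-a))) D R)
    (hA : MeasurableSet A) :
    ∫⁻ p in D ∩ Prod.map (reciprocalShift ε a) (reciprocalShift ε (-a)) ⁻¹' A, lehnerDensity p =
      ∫⁻ p in R ∩ A, lehnerDensity p := by
  rw [← hbij.image_eq, ← image_inter_preimage, setLIntegral_lehnerDensity_image hε
    (hD.inter ((measurable_reciprocalShift.prodMap measurable_reciprocalShift) hA))
    (fun p hp => hDa p hp.1)]

end ReciprocalShift

lemma eqOn_lehnerNatExt_left : EqOn lehnerNatExt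
    (Prod.map (reciprocalShift (-1) 2) (reciprocalShift (-1) (-2))) (Ioo 1 (3 / 2) ×ˢ Ioi (-1)) :=
  fun p hp => by
    rw [lehnerNatExt, if_pos hp.1.2]; ext <;> simp [reciprocalShift]

lemma eqOn_lehnerNatExt_right : EqOn lehnerNatExt
    (Prod.map (reciprocalShift 1 1) (reciprocalShift 1 (-1))) (Ioo (3 / 2) 2 ×ˢ Ioi (-1)) :=
  fun p hp => by
    rw [lehnerNatExt, if_neg (not_lt.2 hp.1.1.le)]; ext <;> simp [reciprocalShift]

lemma bijOn_lehnerNatExt_left :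
    BijOn (Prod.map (reciprocalShift (-1) 2) (reciprocalShift (-1) (-2)))
      (Ioo 1 (3 / 2) ×ˢ Ioi (-1)) (Ioo 1 2 ×ˢ Ioo (-1) 0) := by
  refine (bijOn_reciprocalShift (by norm_num) ?_ ?_).prodMap
    (bijOn_reciprocalShift (by norm_num) ?_ ?_)
  · rintro x ⟨h1, h2⟩
    rw [reciprocalShift, mem_Ioo, lt_div_iff_of_neg (by linarith), div_lt_iff_of_neg (by linarith)]
    constructor <;> linarith
  · rintro u ⟨h1, h2⟩
    have hu : 0 < u := by linarith
    constructor <;> (field_simp; linarith)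
  · rintro y (hy : -1 < y)
    rw [reciprocalShift, mem_Ioo, lt_div_iff₀ (by linarith), div_lt_iff₀ (by linarith)]
    constructor <;> linarith
  · rintro u ⟨h1, h2⟩
    rw [mem_Ioi, ← sub_lt_iff_lt_add', lt_div_iff_of_neg h2]
    linarith

lemma bijOn_lehnerNatExt_right :
    BijOn (Prod.map (reciprocalShift 1 1) (reciprocalShift 1 (-1)))
      (Ioo (3 / 2) 2 ×ˢ Ioi (-1)) (Ioo 1 2 ×ˢ Ioi 0) := by
  refine (bijOn_reciprocalShift one_ne_zero ?_ ?_).prodMap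
    (bijOn_reciprocalShift one_ne_zero ?_ ?_)
  · rintro x ⟨h1, h2⟩
    rw [reciprocalShift, mem_Ioo, lt_div_iff₀ (by linarith), div_lt_iff₀ (by linarith)]
    constructor <;> linarith
  · rintro u ⟨h1, h2⟩
    have hu : 0 < u := by linarith
    constructor <;> (field_simp; linarith)
  · rintro y (hy : -1 < y)
    rw [reciprocalShift, mem_Ioi]
    exact div_pos one_pos (by linarith)
  · rintro u (hu : 0 < u)
    show (-1 : ℝ) < _
    field_simp; linarith

lemma setLIntegral_lehnerDensity_preimage_left {A : Set (ℝ × ℝ)} (hA : MeasurableSet A) :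
    ∫⁻ p in Ioo 1 (3 / 2) ×ˢ Ioi (-1) ∩
        Prod.map (reciprocalShift (-1) 2) (reciprocalShift (-1) (-2)) ⁻¹' A, lehnerDensity p =
      ∫⁻ p in Ioo 1 2 ×ˢ Ioo (-1) 0 ∩ A, lehnerDensity p :=
  setLIntegral_lehnerDensity_inter_preimage (by norm_num) (measurableSet_Ioo.prod measurableSet_Ioi)
    (fun p hp => ⟨(hp.1.2.trans (by norm_num)).ne, ((by norm_num : (-2 : ℝ) < -1).trans hp.2).ne'⟩)
    bijOn_lehnerNatExt_left hA

lemma setLIntegral_lehnerDensity_preimage_right {A : Set (ℝ × ℝ)} (hA : MeasurableSet A) :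
    ∫⁻ p in Ioo (3 / 2) 2 ×ˢ Ioi (-1) ∩
        Prod.map (reciprocalShift 1 1) (reciprocalShift 1 (-1)) ⁻¹' A, lehnerDensity p =
      ∫⁻ p in Ioo 1 2 ×ˢ Ioi 0 ∩ A, lehnerDensity p :=
  setLIntegral_lehnerDensity_inter_preimage one_ne_zero (measurableSet_Ioo.prod measurableSet_Ioi)
    (fun p hp => ⟨((by norm_num : (1 : ℝ) < 3 / 2).trans hp.1.1).ne', hp.2.ne'⟩)
    bijOn_lehnerNatExt_right hA

lemma Ico_prod_Ici_ae_eq_lehner_domains :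
    (Ico (1 : ℝ) 2 ×ˢ Ici (-1 : ℝ) : Set (ℝ × ℝ)) =ᵐ[volume]
      (Ioo 1 (3 / 2) ×ˢ Ioi (-1) ∪ Ioo (3 / 2) 2 ×ˢ Ioi (-1) : Set (ℝ × ℝ)) := by
  rw [← union_prod, Measure.volume_eq_prod]
  refine Measure.set_prod_ae_eq (Filter.EventuallyEq.symm ?_) Ioi_ae_eq_Ici.symm
  refine ((ae_eq_refl _).union Ioo_ae_eq_Ico).trans ?_
  rw [Ioo_union_Ico_eq_Ioo (by norm_num) (by norm_num)]
  exact Ioo_ae_eq_Ico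

lemma Ico_prod_Ici_ae_eq_lehner_ranges :
    (Ico (1 : ℝ) 2 ×ˢ Ici (-1 : ℝ) : Set (ℝ × ℝ)) =ᵐ[volume]
      (Ioo 1 2 ×ˢ Ioo (-1) 0 ∪ Ioo 1 2 ×ˢ Ioi 0 : Set (ℝ × ℝ)) := by
  rw [← prod_union, Measure.volume_eq_prod]
  refine Measure.set_prod_ae_eq Ioo_ae_eq_Ico.symm (Filter.EventuallyEq.symm ?_)
  refine ((ae_eq_refl _).union Ioi_ae_eq_Ici).trans ?_
  rw [Ioo_union_Ici_eq_Ioi (by norm_num)]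
  exact Ioi_ae_eq_Ici

lemma lehnerNatExt_preimage_inter_ae_eq (A : Set (ℝ × ℝ)) :
    (lehnerNatExt ⁻¹' A ∩ Ico (1 : ℝ) 2 ×ˢ Ici (-1 : ℝ) : Set (ℝ × ℝ)) =ᵐ[volume]
      ((Ioo 1 (3 / 2) ×ˢ Ioi (-1) ∩
          Prod.map (reciprocalShift (-1) 2) (reciprocalShift (-1) (-2)) ⁻¹' A) ∪
        (Ioo (3 / 2) 2 ×ˢ Ioi (-1) ∩
          Prod.map (reciprocalShift 1 1) (reciprocalShift 1 (-1)) ⁻¹' A) : Set (ℝ × ℝ)) := by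
  rw [inter_comm, ← eqOn_lehnerNatExt_left.inter_preimage_eq,
    ← eqOn_lehnerNatExt_right.inter_preimage_eq, ← union_inter_distrib_right]
  exact Ico_prod_Ici_ae_eq_lehner_domains.inter (ae_eq_refl _)

lemma ae_eq_lehner_ranges_inter {A : Set (ℝ × ℝ)} (hAΩ : A ⊆ Ico (1 : ℝ) 2 ×ˢ Ici (-1 : ℝ)) :
    A =ᵐ[volume] ((Ioo 1 2 ×ˢ Ioo (-1) 0 ∩ A) ∪ (Ioo 1 2 ×ˢ Ioi 0 ∩ A) : Set (ℝ × ℝ)) := by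
  rw [← union_inter_distrib_right]
  conv_lhs => rw [← inter_eq_right.2 hAΩ]
  exact Ico_prod_Ici_ae_eq_lehner_ranges.inter (ae_eq_refl _)

/-- The natural extension of the Lehner map preserves the measure with density
1/(x+y)^2 on Ω = [1,2) × [-1,∞). -/
theorem lehnerNatExt_invariant_measure :
    ∀ A : Set (ℝ × ℝ), MeasurableSet A →
      A ⊆ Set.Ico (1 : ℝ) 2 ×ˢ Set.Ici (-1 : ℝ) →
      ∫⁻ p in lehnerNatExt ⁻¹' A ∩ Set.Ico (1 : ℝ) 2 ×ˢ Set.Ici (-1 : ℝ),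
        ENNReal.ofReal (1 / (p.1 + p.2) ^ 2) =
      ∫⁻ p in A, ENNReal.ofReal (1 / (p.1 + p.2) ^ 2) := by
  intro A hA hAΩ
  have hD : Disjoint (Ioo (1 : ℝ) (3 / 2) ×ˢ Ioi (-1 : ℝ)) (Ioo (3 / 2) 2 ×ˢ Ioi (-1)) :=
    disjoint_prod.2 (Or.inl (disjoint_left.2 fun _ h h' => h.2.asymm h'.1))
  have hR : Disjoint (Ioo (1 : ℝ) 2 ×ˢ Ioo (-1 : ℝ) 0) (Ioo 1 2 ×ˢ Ioi 0) :=
    disjoint_prod.2 (Or.inr (disjoint_left.2 fun _ h h' => h.2.asymm h'))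
  change ∫⁻ p in _, lehnerDensity p = ∫⁻ p in A, lehnerDensity p
  rw [setLIntegral_congr (lehnerNatExt_preimage_inter_ae_eq A),
    setLIntegral_congr (ae_eq_lehner_ranges_inter hAΩ),
    lintegral_union ((measurableSet_Ioo.prod measurableSet_Ioi).inter
      ((measurable_reciprocalShift.prodMap measurable_reciprocalShift) hA))
      (hD.mono inter_subset_left inter_subset_left),
    lintegral_union ((measurableSet_Ioo.prod measurableSet_Ioi).inter hA)
      (hR.mono inter_subset_left inter_subset_left),
    setLIntegral_lehnerDensity_preimage_left hA, setLIntegral_lehnerDensity_preimage_right hA]
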